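/- The set S⁺ = {(s,t,u) ∈ ℝ³ : 0 < s < 1, 0 < u, u < t, t < 1 − u, (1−t)² − su > 0, t² − (1−s)u > 0, (1−2s)(1−2t+tu−su) > 0} is not a connected subset of ℝ³. -/
import Mathlib


/-- The semialgebraic set S⁺, with coordinates (s, t, u) ∈ ℝ³. -/
def Splus : Set (ℝ × ℝ × ℝ) :=
  {p | 0 < p.1 ∧ p.1 < 1 ∧ 0 < p.2.2 ∧ p.2.2 < p.2.1 ∧ p.2.1 < 1 - p.2.2 ∧
    (1 - p.2.1) ^ 2 - p.1 * p.2.2 > 0 ∧ p.2.1 ^ 2 - (1 - p.1) * p.2.2 > 0 ∧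
    (1 - 2 * p.1) * (1 - 2 * p.2.1 + p.2.1 * p.2.2 - p.1 * p.2.2) > 0}

/-- The set S⁺ is not a connected subset of ℝ³. -/
theorem Splus_not_connected : ¬ IsPreconnected Splus := by
  intro h
  have hU : IsOpen {p : ℝ × ℝ × ℝ | p.1 < 1/2} :=
    isOpen_lt continuous_fst continuous_const
  have hV : IsOpen {p : ℝ × ℝ × ℝ | 1/2 < p.1} :=
    isOpen_lt continuous_const continuous_fst
  have ha : ((1/4 : ℝ), (1/4 : ℝ), (1/100 : ℝ)) ∈ Splus := by
    refine ⟨by norm_num, by norm_num, by norm_num, by norm_num, by norm_num,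
      by norm_num, by norm_num, by norm_num⟩
  have hb : ((3/4 : ℝ), (49/100 : ℝ), (3/10 : ℝ)) ∈ Splus := by
    refine ⟨by norm_num, by norm_num, by norm_num, by norm_num, by norm_num,
      by norm_num, by norm_num, by norm_num⟩
  have hcov : Splus ⊆ {p : ℝ × ℝ × ℝ | p.1 < 1/2} ∪ {p : ℝ × ℝ × ℝ | 1/2 < p.1} := by
    intro p hp
    rcases lt_trichotomy p.1 (1/2) with h1 | h1 | h1
    · exact Or.inl h1
    · exfalso
      have := hp.2.2.2.2.2.2.2
      rw [show (1 : ℝ) - 2 * p.1 = 0 by rw [h1]; ring] at this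
      simp at this
    · exact Or.inr h1
  obtain ⟨p, hpS, hp1, hp2⟩ := h _ _ hU hV hcov
    ⟨_, ha, by norm_num⟩ ⟨_, hb, by norm_num⟩
  simp only [Set.mem_setOf_eq] at hp1 hp2
  linarith
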